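/- The optimized pick-l program upper bounds α_k: the optimal value of maximizing ∑_L γ_L α_L over coefficients γ_L ≥ 0 indexed by l-subsets L, subject to ∑_L γ_L ≤ k/l and, for every b with 1 ≤ b ≤ l and every b-set B, ∑_{L ⊇ B} γ_L ≤ C(k−b,l−b)/C(k−1,l−1), is at least α_k. -/

import Mathlib

/-!
Given `K` with `#K = k`, spread weight `1 / C(k-1, l-1)` uniformly over the `l`-subsets of `K`.
Each `i ∈ K` lies in exactly `C(k-1, l-1)` of them, so for every null vector `z` the ratio
`∑_{i∈K} |zᵢ| / ‖z‖₁` is the weighted sum of the ratios over these `L`, hence at most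
`∑_L γ_L α_L`. The weights are feasible: their total is `C(k,l) / C(k-1,l-1) = k/l`, and a
`b`-set `B` lies in at most `C(k-b, l-b)` of the `l`-subsets of `K`.
-/

open Finset

noncomputable def alphaS {m n : ℕ} (A : Matrix (Fin m) (Fin n) ℝ) (S : Finset (Fin n)) : ℝ :=
  sSup {r : ℝ | ∃ z : Fin n → ℝ, A.mulVec z = 0 ∧ z ≠ 0 ∧
    r = (∑ i ∈ S, |z i|) / (∑ i, |z i|)}

noncomputable def alphaKexact {m n : ℕ} (A : Matrix (Fin m) (Fin n) ℝ) (k : ℕ) : ℝ :=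
  sSup {r : ℝ | ∃ K : Finset (Fin n), K.card = k ∧ r = alphaS A K}

namespace Finset

variable {α : Type*} [DecidableEq α]

lemma card_filter_powersetCard_subset_le (s t : Finset α) (n : ℕ) :
    #{x ∈ t.powersetCard n | s ⊆ x} ≤ (#t - #s).choose (n - #s) := by
  by_cases h : s ⊆ t ∧ #s ≤ n
  · exact (card_filter_powersetCard_subset s t n h.1 h.2).le
  · rw [filter_false_of_mem, card_empty]
    · exact Nat.zero_le _
    intro x hx hsx
    rw [mem_powersetCard] at hx
    exact h ⟨hsx.trans hx.1, hx.2 ▸ card_le_card hsx⟩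

lemma sum_powersetCard_sum {β : Type*} [AddCommMonoid β] (K : Finset α) {l : ℕ} (hl : 1 ≤ l)
    (f : α → β) :
    ∑ L ∈ K.powersetCard l, ∑ i ∈ L, f i = (#K - 1).choose (l - 1) • ∑ i ∈ K, f i := by
  rw [sum_comm' (t' := K) (s' := fun i => {L ∈ K.powersetCard l | {i} ⊆ L}), smul_sum]
  · refine sum_congr rfl fun i hi => ?_
    rw [sum_const, card_filter_powersetCard_subset _ _ _ (singleton_subset_iff.2 hi)
      (by simpa using hl), card_singleton]
  · intro L i
    simp only [mem_filter, mem_powersetCard, singleton_subset_iff]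
    exact ⟨fun h => ⟨⟨h.1, h.2⟩, h.1.1 h.2⟩, fun h => ⟨h.1.1, h.1.2⟩⟩

lemma filter_powersetCard_univ_subset [Fintype α] (K : Finset α) (l : ℕ) :
    {L ∈ (univ : Finset α).powersetCard l | L ⊆ K} = K.powersetCard l := by
  ext L
  simp [mem_powersetCard, and_comm]

end Finset

lemma Nat.choose_mul_eq_mul_choose_pred {k l : ℕ} (hl : 1 ≤ l) (hlk : l ≤ k) :
    k.choose l * l = k * (k - 1).choose (l - 1) := by
  obtain ⟨k, rfl⟩ := Nat.exists_eq_add_of_le' (hl.trans hlk)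
  obtain ⟨l, rfl⟩ := Nat.exists_eq_add_of_le' hl
  simp only [Nat.add_sub_cancel]
  exact (Nat.add_one_mul_choose_eq k l).symm

section NullSpaceRatio

variable {m n : ℕ} (A : Matrix (Fin m) (Fin n) ℝ) (S : Finset (Fin n))

lemma sum_abs_pos_of_ne_zero {z : Fin n → ℝ} (hz : z ≠ 0) : 0 < ∑ i, |z i| := by
  obtain ⟨j, hj⟩ := Function.ne_iff.mp hz
  exact sum_pos' (fun i _ => abs_nonneg _) ⟨j, mem_univ j, abs_pos.mpr hj⟩

lemma div_sum_abs_le_one {z : Fin n → ℝ} (hz : z ≠ 0) :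
    (∑ i ∈ S, |z i|) / (∑ i, |z i|) ≤ 1 := by
  rw [div_le_one (sum_abs_pos_of_ne_zero hz)]
  exact sum_le_sum_of_subset_of_nonneg (subset_univ S) fun i _ _ => abs_nonneg _

lemma bddAbove_alphaS_set :
    BddAbove {r : ℝ | ∃ z : Fin n → ℝ, A.mulVec z = 0 ∧ z ≠ 0 ∧
      r = (∑ i ∈ S, |z i|) / (∑ i, |z i|)} :=
  ⟨1, by rintro _ ⟨z, -, hz, rfl⟩; exact div_sum_abs_le_one S hz⟩

lemma alphaS_le_one : alphaS A S ≤ 1 :=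
  Real.sSup_le (by rintro _ ⟨z, -, hz, rfl⟩; exact div_sum_abs_le_one S hz) zero_le_one

lemma div_sum_abs_le_alphaS {z : Fin n → ℝ} (hAz : A.mulVec z = 0) (hz : z ≠ 0) :
    (∑ i ∈ S, |z i|) / (∑ i, |z i|) ≤ alphaS A S :=
  le_csSup (bddAbove_alphaS_set A S) ⟨z, hAz, hz, rfl⟩

end NullSpaceRatio

section PickL

variable {m n : ℕ} (A : Matrix (Fin m) (Fin n) ℝ) (k l : ℕ)

def pickLValues : Set ℝ :=
  {v : ℝ | ∃ γ : Finset (Fin n) → ℝ,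
    (∀ L, 0 ≤ γ L) ∧
    (∑ L ∈ (Finset.univ : Finset (Fin n)).powersetCard l, γ L ≤ (k : ℝ) / (l : ℝ)) ∧
    (∀ b : ℕ, ∀ B : Finset (Fin n), 1 ≤ b → b ≤ l → B.card = b →
      ∑ L ∈ ((Finset.univ : Finset (Fin n)).powersetCard l).filter (fun L => B ⊆ L),
        γ L ≤ ((k - b).choose (l - b) : ℝ) / ((k - 1).choose (l - 1) : ℝ)) ∧
    v = ∑ L ∈ (Finset.univ : Finset (Fin n)).powersetCard l, γ L * alphaS A L}

lemma bddAbove_pickLValues : BddAbove (pickLValues A k l) := by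
  refine ⟨k / l, ?_⟩
  rintro _ ⟨γ, hγ, hmass, -, rfl⟩
  refine le_trans (sum_le_sum fun L _ => ?_) hmass
  exact mul_le_of_le_one_right (hγ L) (alphaS_le_one A L)

lemma zero_mem_pickLValues : (0 : ℝ) ∈ pickLValues A k l :=
  ⟨0, fun _ => le_rfl, by simp only [Pi.zero_apply, sum_const_zero]; positivity,
    fun _ _ _ _ _ => by simp only [Pi.zero_apply, sum_const_zero]; positivity, by simp⟩

noncomputable def pickWeight (K L : Finset (Fin n)) : ℝ :=
  if L ⊆ K then (((#K - 1).choose (l - 1) : ℕ) : ℝ)⁻¹ else 0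

variable {k l}

lemma pickWeight_nonneg (K L : Finset (Fin n)) : 0 ≤ pickWeight l K L := by
  unfold pickWeight
  split_ifs <;> positivity

lemma sum_pickWeight_mul (K : Finset (Fin n)) (𝒜 : Finset (Finset (Fin n)))
    (f : Finset (Fin n) → ℝ) :
    ∑ L ∈ 𝒜, pickWeight l K L * f L
      = (((#K - 1).choose (l - 1) : ℕ) : ℝ)⁻¹ * ∑ L ∈ 𝒜.filter (· ⊆ K), f L := by
  simp only [pickWeight, ite_mul, zero_mul, ← sum_filter, mul_sum]

lemma sum_pickWeight (K : Finset (Fin n)) (𝒜 : Finset (Finset (Fin n))) :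
    ∑ L ∈ 𝒜, pickWeight l K L
      = (((#K - 1).choose (l - 1) : ℕ) : ℝ)⁻¹ * #(𝒜.filter (· ⊆ K)) := by
  simpa using sum_pickWeight_mul K 𝒜 1

lemma sum_pickWeight_powersetCard (K : Finset (Fin n)) (hl : 1 ≤ l) (hlK : l ≤ #K) :
    ∑ L ∈ (univ : Finset (Fin n)).powersetCard l, pickWeight l K L = (#K : ℝ) / l := by
  have hC : (0 : ℝ) < ((#K - 1).choose (l - 1) : ℕ) := by
    exact_mod_cast Nat.choose_pos (by omega)
  rw [sum_pickWeight, filter_powersetCard_univ_subset, card_powersetCard, inv_mul_eq_div,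
    div_eq_div_iff hC.ne' (by positivity)]
  exact_mod_cast Nat.choose_mul_eq_mul_choose_pred hl hlK

lemma sum_pickWeight_filter_superset_le (K B : Finset (Fin n)) :
    ∑ L ∈ ((univ : Finset (Fin n)).powersetCard l).filter (B ⊆ ·), pickWeight l K L
      ≤ ((#K - #B).choose (l - #B) : ℝ) / ((#K - 1).choose (l - 1) : ℝ) := by
  rw [sum_pickWeight, filter_comm, filter_powersetCard_univ_subset, inv_mul_eq_div]
  gcongr
  exact_mod_cast card_filter_powersetCard_subset_le B K l

lemma div_sum_abs_le_sum_pickWeight_mul_alphaS (K : Finset (Fin n)) (hl : 1 ≤ l)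
    (hlK : l ≤ #K) {z : Fin n → ℝ} (hAz : A.mulVec z = 0) (hz : z ≠ 0) :
    (∑ i ∈ K, |z i|) / (∑ i, |z i|)
      ≤ ∑ L ∈ (univ : Finset (Fin n)).powersetCard l, pickWeight l K L * alphaS A L := by
  have hC : (0 : ℝ) < ((#K - 1).choose (l - 1) : ℕ) := by
    exact_mod_cast Nat.choose_pos (by omega)
  rw [sum_pickWeight_mul, filter_powersetCard_univ_subset]
  calc (∑ i ∈ K, |z i|) / (∑ i, |z i|)
      = (((#K - 1).choose (l - 1) : ℕ) : ℝ)⁻¹ *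
          ∑ L ∈ K.powersetCard l, (∑ i ∈ L, |z i|) / (∑ i, |z i|) := by
        rw [← sum_div, sum_powersetCard_sum K hl, nsmul_eq_mul, mul_div_assoc,
          inv_mul_cancel_left₀ hC.ne']
    _ ≤ _ := by
        gcongr with L
        exact div_sum_abs_le_alphaS A L hAz hz

lemma sum_pickWeight_mul_alphaS_mem_pickLValues (K : Finset (Fin n)) (hl : 1 ≤ l)
    (hlK : l ≤ #K) :
    ∑ L ∈ (univ : Finset (Fin n)).powersetCard l, pickWeight l K L * alphaS A L
      ∈ pickLValues A #K l := by
  refine ⟨pickWeight l K, pickWeight_nonneg K, (sum_pickWeight_powersetCard K hl hlK).le,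
    ?_, rfl⟩
  rintro b B - - rfl
  exact sum_pickWeight_filter_superset_le K B

end PickL

theorem stmt_12_general {m n k l : ℕ} (A : Matrix (Fin m) (Fin n) ℝ)
    (hl : 1 ≤ l) (hlk : l ≤ k) :
    alphaKexact A k ≤
      sSup {v : ℝ | ∃ γ : Finset (Fin n) → ℝ,
        (∀ L, 0 ≤ γ L) ∧
        (∑ L ∈ (Finset.univ : Finset (Fin n)).powersetCard l, γ L ≤ (k : ℝ) / (l : ℝ)) ∧
        (∀ b : ℕ, ∀ B : Finset (Fin n), 1 ≤ b → b ≤ l → B.card = b →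
          ∑ L ∈ ((Finset.univ : Finset (Fin n)).powersetCard l).filter (fun L => B ⊆ L),
            γ L ≤ ((k - b).choose (l - b) : ℝ) / ((k - 1).choose (l - 1) : ℝ)) ∧
        v = ∑ L ∈ (Finset.univ : Finset (Fin n)).powersetCard l, γ L * alphaS A L} := by
  change alphaKexact A k ≤ sSup (pickLValues A k l)
  have hbdd := bddAbove_pickLValues A k l
  have hnonneg : 0 ≤ sSup (pickLValues A k l) := le_csSup hbdd (zero_mem_pickLValues A k l)
  refine Real.sSup_le ?_ hnonneg
  rintro _ ⟨K, rfl, rfl⟩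
  refine Real.sSup_le ?_ hnonneg
  rintro _ ⟨z, hAz, hz, rfl⟩
  exact (div_sum_abs_le_sum_pickWeight_mul_alphaS A K hl hlk hAz hz).trans
    (le_csSup hbdd (sum_pickWeight_mul_alphaS_mem_pickLValues A K hl hlk))

theorem stmt_12 {m n k l : ℕ} (A : Matrix (Fin m) (Fin n) ℝ)
    (hN : ∃ z : Fin n → ℝ, A.mulVec z = 0 ∧ z ≠ 0)
    (hl : 1 ≤ l) (hlk : l ≤ k) (hkn : k ≤ n) :
    alphaKexact A k ≤
      sSup {v : ℝ | ∃ γ : Finset (Fin n) → ℝ,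
        (∀ L, 0 ≤ γ L) ∧
        (∑ L ∈ (Finset.univ : Finset (Fin n)).powersetCard l, γ L ≤ (k : ℝ) / (l : ℝ)) ∧
        (∀ b : ℕ, ∀ B : Finset (Fin n), 1 ≤ b → b ≤ l → B.card = b →
          ∑ L ∈ ((Finset.univ : Finset (Fin n)).powersetCard l).filter (fun L => B ⊆ L),
            γ L ≤ ((k - b).choose (l - b) : ℝ) / ((k - 1).choose (l - 1) : ℝ)) ∧
        v = ∑ L ∈ (Finset.univ : Finset (Fin n)).powersetCard l, γ L * alphaS A L} :=
  stmt_12_general A hl hlk
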